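/- Let G₁, …, G_m be connected simple graphs on the same vertex set {1,…,d}, and let G = G₁ + ⋯ + G_m be the graph on {1,…,d} with edge set ⋃ E(G_i). Then dim(P_{G₁} + ⋯ + P_{G_m}) = d − 2 if G is bipartite, and d − 1 if G is not bipartite. -/

import Mathlib

open Pointwise

/-- `ρ({i,j}) = e_i + e_j`: the 0/1 indicator vector of an edge. -/
def edgeVec {d : ℕ} (e : Sym2 (Fin d)) : Fin d → ℝ :=
  fun t => if t ∈ e then 1 else 0

/-- The edge polytope of a graph `G` on `{1, …, d}`. -/
def edgePolytope {d : ℕ} (G : SimpleGraph (Fin d)) : Set (Fin d → ℝ) :=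
  convexHull ℝ (edgeVec '' G.edgeSet)

/-!
Convex hulls do not change affine spans, and the direction of a Minkowski sum of nonempty sets
is the sum of the directions, so the dimension is that of the span `T` of all differences of
edge vectors of one `G i`. An even walk from `u` to `v` telescopes into such differences, giving
`e_u - e_v ∈ T`. If `⨆ i, G i` has a 2-colouring, every edge vector has coordinate sum `1` on
each colour class, and `T` is exactly the kernel of the two colour-class sums: dimension `d - 2`.
Otherwise every `e_u - e_v` lies in `T`, so `T` is the hyperplane of coordinate sum `0`:
dimension `d - 1`.
-/

section VectorSpan

variable {k V W : Type*} [Ring k] [AddCommGroup V] [Module k V] [AddCommGroup W] [Module k W]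

theorem vectorSpan_add {s t : Set V} (hs : s.Nonempty) (ht : t.Nonempty) :
    vectorSpan k (s + t) = vectorSpan k s ⊔ vectorSpan k t := by
  obtain ⟨p, hp⟩ := hs
  obtain ⟨q, hq⟩ := ht
  apply le_antisymm
  · rw [vectorSpan_def, Submodule.span_le]
    rintro _ ⟨_, ⟨x, hx, y, hy, rfl⟩, _, ⟨x', hx', y', hy', rfl⟩, rfl⟩
    dsimp only
    rw [vsub_eq_sub, add_sub_add_comm]
    exact Submodule.add_mem_sup (vsub_mem_vectorSpan k hx hx') (vsub_mem_vectorSpan k hy hy')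
  · refine sup_le ?_ ?_ <;> rw [vectorSpan_def, Submodule.span_le]
    · rintro _ ⟨x, hx, x', hx', rfl⟩
      dsimp only
      rw [vsub_eq_sub, ← add_sub_add_right_eq_sub x x' q]
      exact vsub_mem_vectorSpan k (Set.add_mem_add hx hq) (Set.add_mem_add hx' hq)
    · rintro _ ⟨y, hy, y', hy', rfl⟩
      dsimp only
      rw [vsub_eq_sub, ← add_sub_add_left_eq_sub y y' p]
      exact vsub_mem_vectorSpan k (Set.add_mem_add hp hy) (Set.add_mem_add hp hy')

theorem vectorSpan_finset_sum {ι : Type*} [DecidableEq ι] (u : Finset ι) {s : ι → Set V}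
    (hs : ∀ i ∈ u, (s i).Nonempty) :
    vectorSpan k (∑ i ∈ u, s i) = ⨆ i ∈ u, vectorSpan k (s i) := by
  induction u using Finset.induction_on with
  | empty => simp [← Set.singleton_zero]
  | insert a u ha ih =>
    rw [Finset.sum_insert ha, Finset.iSup_insert, ← ih fun i hi => hs i (by simp [hi])]
    refine vectorSpan_add (hs a (by simp)) ?_
    exact Finset.sum_induction _ Set.Nonempty (fun _ _ => .add) Set.zero_nonempty
      fun i hi => hs i (by simp [hi])

theorem vectorSpan_le_ker_of_forall_eq {s : Set V} (f : V →ₗ[k] W) {c : W}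
    (h : ∀ x ∈ s, f x = c) : vectorSpan k s ≤ LinearMap.ker f := by
  rw [vectorSpan_def, Submodule.span_le]
  rintro _ ⟨x, hx, y, hy, rfl⟩
  simp [h x hx, h y hy]

end VectorSpan

section FiberSum

variable {K ι β : Type*} [Fintype ι] [DecidableEq β]

def fiberSum [CommSemiring K] (c : ι → β) : (ι → K) →ₗ[K] β → K where
  toFun x b := ∑ t with c t = b, x t
  map_add' x y := by ext; simp [Finset.sum_add_distrib]
  map_smul' a x := by ext; simp [Finset.mul_sum]

@[simp]
theorem fiberSum_apply [CommSemiring K] (c : ι → β) (x : ι → K) (b : β) :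
    fiberSum c x b = ∑ t with c t = b, x t := rfl

@[simp]
theorem fiberSum_single [CommSemiring K] [DecidableEq ι] (c : ι → β) (u : ι) (a : K) :
    fiberSum c (Pi.single u a) = Pi.single (c u) a := by
  ext b
  by_cases h : c u = b
  · subst h; simp [Pi.single_apply]
  · simp [Pi.single_apply, h, Ne.symm h]

theorem ker_fiberSum_le [CommRing K] [DecidableEq ι] {c : ι → β} {T : Submodule K (ι → K)}
    (hT : ∀ u v, c u = c v → Pi.single u 1 - Pi.single v 1 ∈ T) :
    LinearMap.ker (fiberSum c) ≤ T := by
  intro x hx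
  cases isEmpty_or_nonempty ι
  · simp [Subsingleton.elim x 0]
  -- move the mass of each coordinate to a fixed representative of its fibre
  set r := Function.invFun c
  have hr : ∀ t, c (r (c t)) = c t := fun t => Function.invFun_eq ⟨t, rfl⟩
  have hfibers : ∑ t, x t • Pi.single (r (c t)) (1 : K) = 0 := by
    rw [← Finset.sum_fiberwise_of_maps_to fun t _ =>
      Finset.mem_image_of_mem c (Finset.mem_univ t)]
    refine Finset.sum_eq_zero fun b _ => ?_
    rw [Finset.sum_congr rfl fun t ht => by rw [(Finset.mem_filter.1 ht).2], ← Finset.sum_smul]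
    simp [← fiberSum_apply, LinearMap.mem_ker.1 hx]
  have hsplit : x = ∑ t, x t • (Pi.single t 1 - Pi.single (r (c t)) 1) := by
    simp only [smul_sub, Finset.sum_sub_distrib, hfibers, sub_zero]
    simp only [← Pi.single_smul', smul_eq_mul, mul_one, Finset.univ_sum_single]
  rw [hsplit]
  exact Submodule.sum_mem _ fun t _ => Submodule.smul_mem _ _ (hT _ _ (hr t).symm)

theorem finrank_ker_fiberSum [Field K] [Fintype β] {c : ι → β} (hc : c.Surjective) :
    Module.finrank K (LinearMap.ker (fiberSum (K := K) c)) = Fintype.card ι - Fintype.card β := by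
  classical
  have hsurj : Function.Surjective (fiberSum (K := K) c) := fun y =>
    ⟨∑ b, Pi.single (c.surjInv hc b) (y b), by
      simp [map_sum, Function.surjInv_eq hc, Finset.univ_sum_single]⟩
  have := LinearMap.finrank_range_add_finrank_ker (fiberSum (K := K) c)
  rw [LinearMap.range_eq_top.mpr hsurj, finrank_top, Module.finrank_fintype_fun_eq_card,
    Module.finrank_fintype_fun_eq_card] at this
  omega

end FiberSum

theorem SimpleGraph.Coloring.surjective_of_adj {V : Type*} {G : SimpleGraph V}
    (C : G.Coloring Bool) {u v : V} (h : G.Adj u v) : Function.Surjective C := by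
  have := C.valid h
  intro b
  by_cases hu : C u = b
  · exact ⟨u, hu⟩
  · exact ⟨v, by cases b <;> cases hcu : C u <;> cases hcv : C v <;> simp_all⟩

section EdgeSpan

variable {d : ℕ}

def edgeSpan (Γ : SimpleGraph (Fin d)) : Submodule ℝ (Fin d → ℝ) :=
  vectorSpan ℝ (edgeVec '' Γ.edgeSet)

theorem edgeVec_mk {u v : Fin d} (h : u ≠ v) :
    edgeVec s(u, v) = Pi.single u 1 + Pi.single v 1 := by
  ext t
  by_cases htu : t = u <;> by_cases htv : t = v <;> simp_all [edgeVec]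

theorem edgeVec_sub_edgeVec_mem_edgeSpan {Γ : SimpleGraph (Fin d)} {e f : Sym2 (Fin d)}
    (he : e ∈ Γ.edgeSet) (hf : f ∈ Γ.edgeSet) : edgeVec e - edgeVec f ∈ edgeSpan Γ :=
  vsub_mem_vectorSpan ℝ (Set.mem_image_of_mem _ he) (Set.mem_image_of_mem _ hf)

theorem single_sub_single_mem_edgeSpan {Γ : SimpleGraph (Fin d)} :
    ∀ {u v : Fin d} (p : Γ.Walk u v), Even p.length →
      (Pi.single u 1 - Pi.single v 1 : Fin d → ℝ) ∈ edgeSpan Γ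
  | _, _, .nil, _ => by simp
  | _, _, .cons _ .nil, hp => by simp at hp
  | u, _, .cons (v := x) hux (.cons (v := y) hxy p), hp => by
    have hstep : (Pi.single u 1 - Pi.single y 1 : Fin d → ℝ) =
        edgeVec s(u, x) - edgeVec s(x, y) := by
      rw [edgeVec_mk hux.ne, edgeVec_mk hxy.ne]
      abel
    have := (edgeSpan Γ).add_mem (hstep ▸ edgeVec_sub_edgeVec_mem_edgeSpan hux hxy)
      (single_sub_single_mem_edgeSpan p (by simpa [Nat.even_add_one] using hp))
    rwa [sub_add_sub_cancel] at this

theorem edgeSpan_le_ker_fiberSum {β : Type*} [DecidableEq β] {Γ : SimpleGraph (Fin d)}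
    {c : Fin d → β} {y : β → ℝ}
    (h : ∀ u v, Γ.Adj u v → Pi.single (c u) 1 + Pi.single (c v) 1 = y) :
    edgeSpan Γ ≤ LinearMap.ker (fiberSum c) := by
  refine vectorSpan_le_ker_of_forall_eq _ (c := y) ?_
  rintro _ ⟨e, he, rfl⟩
  induction e using Sym2.ind with
  | _ u v => simp [edgeVec_mk (Γ.ne_of_adj he), h u v he]

theorem edgeSpan_eq_ker_of_coloring {Γ : SimpleGraph (Fin d)} (hΓ : Γ.Connected)
    (C : Γ.Coloring Bool) : edgeSpan Γ = LinearMap.ker (fiberSum C) := by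
  refine le_antisymm (edgeSpan_le_ker_fiberSum (y := 1) fun u v huv => ?_) ?_
  · have := C.valid huv
    ext b
    cases b <;> cases hu : C u <;> cases hv : C v <;> simp_all
  · refine ker_fiberSum_le fun u v huv => ?_
    obtain ⟨p⟩ := hΓ.preconnected u v
    exact single_sub_single_mem_edgeSpan p ((C.even_length_iff_congr p).2 (by rw [huv]))

variable {m : ℕ} {G : Fin m → SimpleGraph (Fin d)}

theorem iSup_edgeSpan_eq_ker_of_coloring (hm : 0 < m) (hconn : ∀ i, (G i).Connected)
    (C : (⨆ i, G i).Coloring Bool) : ⨆ i, edgeSpan (G i) = LinearMap.ker (fiberSum C) := by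
  have : Nonempty (Fin m) := ⟨⟨0, hm⟩⟩
  calc ⨆ i, edgeSpan (G i) = ⨆ _ : Fin m, LinearMap.ker (fiberSum C) :=
        iSup_congr fun i => edgeSpan_eq_ker_of_coloring (hconn i) (C.comp (.ofLE (le_iSup G i)))
    _ = LinearMap.ker (fiberSum C) := iSup_const

/-- The differences `e_u - e_v` lying in the span form an equivalence relation; each edge
`ab` of some `G i` meets every class, since a walk in `G i` from `w` to `a` or to `b` has even
length. If there were two classes, membership in one of them would 2-colour `⨆ i, G i`. -/
theorem single_sub_single_mem_iSup_edgeSpan (hconn : ∀ i, (G i).Connected)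
    (hG : ¬ (⨆ i, G i).Colorable 2) (u v : Fin d) :
    (Pi.single u 1 - Pi.single v 1 : Fin d → ℝ) ∈ ⨆ i, edgeSpan (G i) := by
  classical
  set R : Fin d → Fin d → Prop := fun u v =>
    (Pi.single u 1 - Pi.single v 1 : Fin d → ℝ) ∈ ⨆ i, edgeSpan (G i)
  have symm {a b} (h : R a b) : R b a := by simpa [R] using neg_mem h
  have trans {a b c} (h : R a b) (h' : R b c) : R a c := by simpa [R] using add_mem h h'
  have adj {a b} (w : Fin d) (hab : (⨆ i, G i).Adj a b) : R w a ∨ R w b := by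
    obtain ⟨i, hab⟩ := SimpleGraph.iSup_adj.1 hab
    obtain ⟨p⟩ := (hconn i).preconnected w a
    have even {x} (q : (G i).Walk w x) (hq : Even q.length) : R w x :=
      Submodule.mem_iSup_of_mem i (single_sub_single_mem_edgeSpan q hq)
    rcases Nat.even_or_odd p.length with hp | hp
    · exact .inl (even p hp)
    · exact .inr (even (p.concat hab) (by simpa [Nat.even_add_one] using hp))
  by_contra huv
  have proper {a b} (hab : (⨆ i, G i).Adj a b) : decide (R a u) ≠ decide (R b u) := by
    intro heq
    by_cases hau : R a u
    · have hbu : R b u := by simpa [hau] using heq.symm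
      exact huv (symm ((adj v hab).elim (trans · hau) (trans · hbu)))
    · have hbu : ¬ R b u := by simpa [hau] using heq.symm
      exact (adj u hab).elim (hau ∘ symm) (hbu ∘ symm)
  exact hG (by simpa using (SimpleGraph.Coloring.mk _ proper).colorable)

theorem iSup_edgeSpan_eq_ker_of_not_colorable (hconn : ∀ i, (G i).Connected)
    (hG : ¬ (⨆ i, G i).Colorable 2) :
    ⨆ i, edgeSpan (G i) = LinearMap.ker (fiberSum fun _ : Fin d => ()) :=
  le_antisymm (iSup_le fun _ => edgeSpan_le_ker_fiberSum fun _ _ _ => rfl)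
    (ker_fiberSum_le fun u v _ => single_sub_single_mem_iSup_edgeSpan hconn hG u v)

theorem direction_affineSpan_sum_edgePolytope (hG : ∀ i, (G i).edgeSet.Nonempty) :
    (affineSpan ℝ (∑ i, edgePolytope (G i))).direction = ⨆ i, edgeSpan (G i) := by
  simp only [edgePolytope]
  rw [← convexHull_sum, affineSpan_convexHull, direction_affineSpan,
    vectorSpan_finset_sum _ fun i _ => (hG i).image edgeVec]
  simp [edgeSpan]

theorem sum_edgePolytope_eq_empty (hm : 0 < m) (hd : d ≤ 1) :
    ∑ i, edgePolytope (G i) = ∅ := by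
  obtain ⟨k, rfl⟩ := Nat.exists_eq_add_one_of_ne_zero hm.ne'
  have : Subsingleton (Fin d) := Fin.subsingleton_iff_le_one.2 hd
  rw [Fin.sum_univ_succ, edgePolytope, Subsingleton.elim (G 0) ⊥, SimpleGraph.edgeSet_bot,
    Set.image_empty, convexHull_empty, Set.empty_add]

end EdgeSpan

/-- Proposition 3.2: for connected graphs `G₁, …, G_m` on the same vertex set `{1,…,d}`,
the Minkowski sum `P_{G₁} + ⋯ + P_{G_m}` has dimension `d - 2` if the union graph is
bipartite, and `d - 1` otherwise. -/
theorem dim_minkowski_sum_edgePolytopes {d m : ℕ} (hm : 0 < m)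
    (G : Fin m → SimpleGraph (Fin d)) (hconn : ∀ i, (G i).Connected) :
    ((⨆ i, G i).Colorable 2 →
      Module.finrank ℝ (affineSpan ℝ (∑ i, edgePolytope (G i))).direction = d - 2) ∧
    (¬ (⨆ i, G i).Colorable 2 →
      Module.finrank ℝ (affineSpan ℝ (∑ i, edgePolytope (G i))).direction = d - 1) := by
  rcases le_or_gt d 1 with hd | hd
  · rw [sum_edgePolytope_eq_empty hm hd, AffineSubspace.span_empty,
      AffineSubspace.direction_bot, finrank_bot]
    exact ⟨fun _ => by omega, fun _ => by omega⟩
  have : Nontrivial (Fin d) := Fin.nontrivial_iff_two_le.2 hd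
  have hadj (i : Fin m) : ∃ v, (G i).Adj ⟨0, by omega⟩ v :=
    (hconn i).preconnected.exists_adj_of_nontrivial _
  rw [direction_affineSpan_sum_edgePolytope fun i => (hadj i).elim fun v h => ⟨s(_, v), h⟩]
  refine ⟨fun hcol => ?_, fun hcol => ?_⟩
  · let C := hcol.toColoring (α := Bool) (by simp)
    obtain ⟨v, hv⟩ := hadj ⟨0, hm⟩
    rw [iSup_edgeSpan_eq_ker_of_coloring hm hconn C,
      finrank_ker_fiberSum (C.surjective_of_adj (le_iSup G _ hv))]
    simp
  · rw [iSup_edgeSpan_eq_ker_of_not_colorable hconn hcol,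
      finrank_ker_fiberSum fun _ => ⟨⟨0, by omega⟩, rfl⟩]
    simp
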